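/- Let R be a commutative ring, L a Lie algebra over R, J a Lie ideal of L, and W a subset of (the carrier of) J such that J is generated as a Lie subalgebra of L by W. Let ι : L → U(L) denote the canonical map into the universal enveloping algebra. Then the two-sided ideal of U(L) generated by ι(W), the left ideal of U(L) generated by ι(W), and the right ideal of U(L) generated by ι(W) all coincide, and they coincide with the two-sided ideal of U(L) generated by ι(J). In particular, every element x of the two-sided ideal generated by ι(J) can be written as a finite sum Σᵢ aᵢ·ι(wᵢ) with aᵢ ∈ U(L) and wᵢ ∈ W. -/

import Mathlib

open UniversalEnvelopingAlgebra in
private theorem uea_induction {R : Type*} [CommRing R] {L : Type*} [LieRing L] [LieAlgebra R L]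
    {C : UniversalEnvelopingAlgebra R L → Prop}
    (halg : ∀ r, C (algebraMap R (UniversalEnvelopingAlgebra R L) r))
    (hι : ∀ x, C (ι R x))
    (hmul : ∀ a b, C a → C b → C (a * b)) (hadd : ∀ a b, C a → C b → C (a + b)) :
    ∀ a, C a := by
  intro a
  obtain ⟨a, rfl⟩ : ∃ t, mkAlgHom R L t = a := Quotient.exists_rep a
  induction a using TensorAlgebra.induction with
  | algebraMap r => rw [AlgHom.commutes]; exact halg r
  | ι x => rw [show (mkAlgHom R L)
      ((TensorAlgebra.ι R) x) = ι R x from (ι_apply R x).symm]; exact hι x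
  | mul a b ha hb => rw [map_mul]; exact hmul _ _ ha hb
  | add a b ha hb => rw [map_add]; exact hadd _ _ ha hb

open UniversalEnvelopingAlgebra in
/-- **Ideals of `U(L)` generated by a Lie ideal.**
Let `L` be a Lie algebra over a commutative ring `R`, `J` a Lie ideal of `L`, and `W ⊆ J` a
subset generating `J` as a Lie subalgebra of `L`.  Writing `ι : L → U(L)` for the canonical
map into the universal enveloping algebra, the left ideal, the right ideal and the two-sided
ideal of `U(L)` generated by `ι(W)` all coincide, and they coincide with the two-sided ideal
generated by `ι(J)`.  In particular every element of the latter is a finite sum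
`Σᵢ aᵢ * ι(wᵢ)` with `aᵢ ∈ U(L)`, `wᵢ ∈ W`. -/
theorem stmt_2 (R : Type*) [CommRing R] (L : Type*) [LieRing L] [LieAlgebra R L]
    (J : LieIdeal R L) (W : Set L)
    (hWJ : W ⊆ (J : Set L))
    (hgen : (J : Set L) ⊆ (LieSubalgebra.lieSpan R L W : Set L)) :
    ((Ideal.span (⇑(ι R (L := L)) '' W) : Ideal (UniversalEnvelopingAlgebra R L)) :
        Set (UniversalEnvelopingAlgebra R L)) =
      ((Submodule.span (UniversalEnvelopingAlgebra R L)ᵐᵒᵖ (⇑(ι R (L := L)) '' W)) :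
        Set (UniversalEnvelopingAlgebra R L)) ∧
    ((Ideal.span (⇑(ι R (L := L)) '' W) : Ideal (UniversalEnvelopingAlgebra R L)) :
        Set (UniversalEnvelopingAlgebra R L)) =
      ((TwoSidedIdeal.span (⇑(ι R (L := L)) '' W)) :
        Set (UniversalEnvelopingAlgebra R L)) ∧
    ((TwoSidedIdeal.span (⇑(ι R (L := L)) '' W)) :
        Set (UniversalEnvelopingAlgebra R L)) =
      ((TwoSidedIdeal.span (⇑(ι R (L := L)) '' (J : Set L))) :
        Set (UniversalEnvelopingAlgebra R L)) ∧
    ∀ x ∈ TwoSidedIdeal.span (⇑(ι R (L := L)) '' (J : Set L)),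
      ∃ (n : ℕ) (a : Fin n → UniversalEnvelopingAlgebra R L) (w : Fin n → L),
        (∀ i, w i ∈ W) ∧ x = ∑ i, a i * ι R (w i) := by
  set U := UniversalEnvelopingAlgebra R L with hU
  set I : Ideal U := Ideal.span (⇑(ι R (L := L)) '' W) with hI
  set Ir : Submodule Uᵐᵒᵖ U := Submodule.span Uᵐᵒᵖ (⇑(ι R (L := L)) '' W) with hIr
  have hWI : ∀ w ∈ W, ι R w ∈ I := fun w hw => Ideal.subset_span ⟨w, hw, rfl⟩
  have hWIr : ∀ w ∈ W, ι R w ∈ Ir := fun w hw => Submodule.subset_span ⟨w, hw, rfl⟩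
  -- ι of the Lie span of W lands in the left ideal I
  have hT : ∀ x ∈ LieSubalgebra.lieSpan R L W, ι R x ∈ I := by
    let T : LieSubalgebra R L :=
      { carrier := {x | ι R x ∈ I}
        add_mem' := fun {x y} hx hy => by
          simp only [Set.mem_setOf_eq, map_add]; exact I.add_mem hx hy
        zero_mem' := by simp only [Set.mem_setOf_eq, map_zero]; exact I.zero_mem
        smul_mem' := fun r x hx => by
          simp only [Set.mem_setOf_eq, map_smul]
          rw [Algebra.smul_def]
          exact I.mul_mem_left _ hx
        lie_mem' := fun {x y} hx hy => by
          simp only [Set.mem_setOf_eq, @LieHom.map_lie R L _ _ _ _ LieRing.ofAssociativeRing LieAlgebra.ofAssociativeAlgebra (ι R (L := L)), Ring.lie_def]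
          exact I.sub_mem (I.mul_mem_left _ hy) (I.mul_mem_left _ hx) }
    intro x hx
    exact (LieSubalgebra.lieSpan_le (K := T)).mpr (fun w hw => hWI w hw) hx
  have hJI : ∀ x ∈ J, ι R x ∈ I := fun x hx => hT x (hgen hx)
  -- I is closed under right multiplication by ι
  have hmulι : ∀ x : L, ∀ u ∈ I, u * ι R x ∈ I := by
    intro x u hu
    induction hu using Submodule.span_induction with
    | mem u hu =>
      obtain ⟨w, hw, rfl⟩ := hu
      have hb : ⁅w, x⁆ ∈ J := by
        rw [← lie_skew]; exact J.neg_mem (J.lie_mem (hWJ hw))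
      have key : ι R w * ι R x = ι R ⁅w, x⁆ + ι R x * ι R w := by
        rw [@LieHom.map_lie R L _ _ _ _ LieRing.ofAssociativeRing LieAlgebra.ofAssociativeAlgebra (ι R (L := L)), Ring.lie_def]; abel
      rw [key]
      exact I.add_mem (hJI _ hb) (I.mul_mem_left _ (hWI w hw))
    | zero => rw [zero_mul]; exact I.zero_mem
    | add a b _ _ ha hb => rw [add_mul]; exact I.add_mem ha hb
    | smul a u _ hu =>
      rw [smul_eq_mul, mul_assoc]
      exact I.mul_mem_left _ hu
  -- I is closed under arbitrary right multiplication
  have hright : ∀ v : U, ∀ u ∈ I, u * v ∈ I := by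
    intro v
    induction v using uea_induction with
    | halg r => intro u hu; rw [← Algebra.commutes r u]
                exact I.mul_mem_left _ hu
    | hι x => exact fun u hu => hmulι x u hu
    | hmul a b ha hb => intro u hu; rw [← mul_assoc]; exact hb _ (ha _ hu)
    | hadd a b ha hb => intro u hu; rw [mul_add]; exact I.add_mem (ha _ hu) (hb _ hu)
  -- ι of the Lie span of W lands in the right ideal Ir
  have hT' : ∀ x ∈ LieSubalgebra.lieSpan R L W, ι R x ∈ Ir := by
    let T : LieSubalgebra R L :=
      { carrier := {x | ι R x ∈ Ir}
        add_mem' := fun {x y} hx hy => by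
          simp only [Set.mem_setOf_eq, map_add]; exact Ir.add_mem hx hy
        zero_mem' := by simp only [Set.mem_setOf_eq, map_zero]; exact Ir.zero_mem
        smul_mem' := fun r x hx => by
          simp only [Set.mem_setOf_eq, map_smul]
          rw [show r • ι R x = MulOpposite.op (algebraMap R U r) • ι R x by
            show _ = ι R x * algebraMap R U r
            rw [← Algebra.commutes r (ι R x), Algebra.smul_def]]
          exact Ir.smul_mem _ hx
        lie_mem' := fun {x y} hx hy => by
          simp only [Set.mem_setOf_eq, @LieHom.map_lie R L _ _ _ _ LieRing.ofAssociativeRing LieAlgebra.ofAssociativeAlgebra (ι R (L := L)), Ring.lie_def]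
          refine Ir.sub_mem ?_ ?_
          · exact Ir.smul_mem (MulOpposite.op (ι R y)) hx
          · exact Ir.smul_mem (MulOpposite.op (ι R x)) hy }
    intro x hx
    exact (LieSubalgebra.lieSpan_le (K := T)).mpr (fun w hw => hWIr w hw) hx
  have hJIr : ∀ x ∈ J, ι R x ∈ Ir := fun x hx => hT' x (hgen hx)
  -- Ir is closed under left multiplication by ι
  have hmulι' : ∀ x : L, ∀ u ∈ Ir, ι R x * u ∈ Ir := by
    intro x u hu
    induction hu using Submodule.span_induction with
    | mem u hu =>
      obtain ⟨w, hw, rfl⟩ := hu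
      have hb : ⁅w, x⁆ ∈ J := by
        rw [← lie_skew]; exact J.neg_mem (J.lie_mem (hWJ hw))
      have key : ι R x * ι R w = ι R w * ι R x - ι R ⁅w, x⁆ := by
        rw [@LieHom.map_lie R L _ _ _ _ LieRing.ofAssociativeRing LieAlgebra.ofAssociativeAlgebra (ι R (L := L)), Ring.lie_def]; abel
      rw [key]
      exact Ir.sub_mem (Ir.smul_mem (MulOpposite.op (ι R x)) (hWIr w hw)) (hJIr _ hb)
    | zero => rw [mul_zero]; exact Ir.zero_mem
    | add a b _ _ ha hb => rw [mul_add]; exact Ir.add_mem ha hb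
    | smul a u _ hu =>
      rw [show a • u = u * a.unop from rfl, ← mul_assoc]
      exact Ir.smul_mem a hu
  have hleft' : ∀ v : U, ∀ u ∈ Ir, v * u ∈ Ir := by
    intro v
    induction v using uea_induction with
    | halg r => intro u hu; rw [Algebra.commutes r u]
                exact Ir.smul_mem (MulOpposite.op _) hu
    | hι x => exact fun u hu => hmulι' x u hu
    | hmul a b ha hb => intro u hu; rw [mul_assoc]; exact ha _ (hb _ hu)
    | hadd a b ha hb => intro u hu; rw [add_mul]; exact Ir.add_mem (ha _ hu) (hb _ hu)
  -- the two one-sided ideals coincide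
  have hIIr : (I : Set U) = (Ir : Set U) := by
    apply Set.Subset.antisymm
    · intro u hu
      simp only [SetLike.mem_coe] at hu ⊢
      induction hu using Submodule.span_induction with
      | mem u hu => exact Submodule.subset_span hu
      | zero => exact Ir.zero_mem
      | add a b _ _ ha hb => exact Ir.add_mem ha hb
      | smul a u _ hu => rw [smul_eq_mul]; exact hleft' a u hu
    · intro u hu
      simp only [SetLike.mem_coe] at hu ⊢
      induction hu using Submodule.span_induction with
      | mem u hu => exact Ideal.subset_span hu
      | zero => exact I.zero_mem
      | add a b _ _ ha hb => exact I.add_mem ha hb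
      | smul a u _ hu =>
        rw [show a • u = u * a.unop from rfl]; exact hright a.unop u hu
  -- I as a two-sided ideal
  set I2 : TwoSidedIdeal U := TwoSidedIdeal.mk' (I : Set U) I.zero_mem
    (fun hx hy => I.add_mem hx hy) (fun hx => I.neg_mem hx)
    (fun {x y} hy => I.mul_mem_left x hy) (fun {x y} hx => hright y x hx) with hI2
  have hI2mem : ∀ x : U, x ∈ I2 ↔ x ∈ I := fun x =>
    TwoSidedIdeal.mem_mk' (I : Set U) _ _ _ _ _ x
  have hIT2 : (I : Set U) = (TwoSidedIdeal.span (⇑(ι R (L := L)) '' W) : Set U) := by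
    apply Set.Subset.antisymm
    · intro u hu
      simp only [SetLike.mem_coe] at hu ⊢
      induction hu using Submodule.span_induction with
      | mem u hu => exact TwoSidedIdeal.subset_span hu
      | zero => exact zero_mem _
      | add a b _ _ ha hb => exact add_mem ha hb
      | smul a u _ hu =>
        rw [smul_eq_mul]; exact TwoSidedIdeal.mul_mem_left _ _ _ hu
    · intro u hu
      simp only [SetLike.mem_coe] at hu ⊢
      rw [← hI2mem]
      exact TwoSidedIdeal.mem_span_iff.mp hu I2
        (fun s hs => (hI2mem s).mpr (Ideal.subset_span hs))
  have hT2JW : (TwoSidedIdeal.span (⇑(ι R (L := L)) '' W) : Set U) =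
      (TwoSidedIdeal.span (⇑(ι R (L := L)) '' (J : Set L)) : Set U) := by
    apply Set.Subset.antisymm
    · exact fun u hu => TwoSidedIdeal.span_mono (Set.image_mono hWJ) hu
    · intro u hu
      simp only [SetLike.mem_coe] at hu ⊢
      have : u ∈ I2 := TwoSidedIdeal.mem_span_iff.mp hu I2
        (by rintro s ⟨x, hx, rfl⟩; exact (hI2mem _).mpr (hJI x hx))
      rw [hI2mem] at this
      have h2 : u ∈ (I : Set U) := this
      rw [hIT2] at h2
      exact h2
  refine ⟨hIIr, hIT2, hT2JW, ?_⟩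
  intro x hx
  have hxI : x ∈ I := by
    have : x ∈ (TwoSidedIdeal.span (⇑(ι R (L := L)) '' (J : Set L)) : Set U) := hx
    rw [← hT2JW, ← hIT2] at this
    exact this
  obtain ⟨n, a, g, hsum⟩ := Submodule.mem_span_set'.mp hxI
  choose w hw hιw using fun i => (g i).2
  refine ⟨n, a, w, hw, ?_⟩
  rw [← hsum]
  refine Finset.sum_congr rfl fun i _ => ?_
  rw [smul_eq_mul, hιw i]
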